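/- arXiv:2307.08096 — 2 statements merged into one kernel-verified Lean document; each statement's English description precedes it below -/
import Mathlib

section
/- A strictly diagonally dominant Z-matrix with positive diagonal entries is an M-matrix, i.e., it is invertible and its inverse has non-negative entries. -/
/-!
Diagonal dominance makes `B` invertible (Lévy–Desplanques). With non-positive off-diagonal
entries and a positive diagonal, every row sum of `B` is positive, which yields a minimum
principle: if `B x ≥ 0`, evaluating `B x` at an index where `x` is smallest shows that this
smallest entry is non-negative. Applied to the columns of `B⁻¹`, whose images under `B` are the
standard basis vectors, this gives `B⁻¹ ≥ 0`.
-/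

open Finset

namespace Matrix

variable {ι R : Type*} [Fintype ι]

theorem isUnit_of_sum_abs_offDiag_lt_abs_diag [DecidableEq ι] {B : Matrix ι ι ℝ}
    (hdd : ∀ i, ∑ j ∈ univ.erase i, |B i j| < |B i i|) : IsUnit B :=
  (isUnit_iff_isUnit_det B).2 (det_ne_zero_of_sum_row_lt_diag hdd).isUnit

theorem sum_row_pos_of_sum_abs_offDiag_lt_diag [DecidableEq ι] {B : Matrix ι ι ℝ} (i : ι)
    (hdiag : 0 < B i i) (hdd : ∑ j ∈ univ.erase i, |B i j| < |B i i|) :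
    0 < ∑ j, B i j := by
  have hoff : -∑ j ∈ univ.erase i, B i j ≤ ∑ j ∈ univ.erase i, |B i j| := by
    rw [← sum_neg_distrib]
    exact sum_le_sum fun j _ => neg_le_abs _
  rw [← add_sum_erase _ _ (mem_univ i)]
  rw [abs_of_pos hdiag] at hdd
  linarith

variable [CommRing R] [LinearOrder R] [IsStrictOrderedRing R]

theorem nonneg_of_mulVec_nonneg {B : Matrix ι ι R} (hZ : ∀ i j, i ≠ j → B i j ≤ 0)
    (hrow : ∀ i, 0 < ∑ j, B i j) {x : ι → R} (hx : 0 ≤ B *ᵥ x) : 0 ≤ x := by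
  intro k
  by_contra! hk
  obtain ⟨i, -, hmin⟩ := exists_min_image univ x ⟨k, mem_univ k⟩
  have hxi : x i < 0 := (hmin k (mem_univ k)).trans_lt hk
  have hle : (B *ᵥ x) i ≤ (∑ j, B i j) * x i := by
    rw [mulVec, dotProduct, sum_mul, ← sub_nonpos, ← sum_sub_distrib]
    refine sum_nonpos fun j _ => ?_
    rw [← mul_sub]
    rcases eq_or_ne i j with rfl | hij
    · simp
    · exact mul_nonpos_of_nonpos_of_nonneg (hZ i j hij) (sub_nonneg.2 (hmin j (mem_univ j)))
  exact (hle.trans_lt (mul_neg_of_pos_of_neg (hrow i) hxi)).not_ge (hx i)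

theorem inv_apply_nonneg_of_mulVec_nonneg_imp_nonneg [DecidableEq ι] {B : Matrix ι ι R}
    (hB : IsUnit B) (hmono : ∀ x, 0 ≤ B *ᵥ x → 0 ≤ x) (i j : ι) : 0 ≤ B⁻¹ i j := by
  have hcol : B *ᵥ (B⁻¹ *ᵥ Pi.single j 1) = Pi.single j 1 := by
    rw [mulVec_mulVec, mul_nonsing_inv B ((isUnit_iff_isUnit_det B).1 hB), one_mulVec]
  have := hmono _ (hcol ▸ Pi.single_nonneg.2 zero_le_one) i
  rwa [mulVec_single_one] at this

end Matrix

theorem stmt_1 (M : ℕ) (B : Matrix (Fin M) (Fin M) ℝ)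
    (hZ : ∀ i j, i ≠ j → B i j ≤ 0)
    (hdiag : ∀ i, 0 < B i i)
    (hdd : ∀ i, ∑ j ∈ Finset.univ.erase i, |B i j| < |B i i|) :
    IsUnit B ∧ ∀ i j, 0 ≤ B⁻¹ i j := by
  have hB := Matrix.isUnit_of_sum_abs_offDiag_lt_abs_diag hdd
  have hrow i := Matrix.sum_row_pos_of_sum_abs_offDiag_lt_diag i (hdiag i) (hdd i)
  exact ⟨hB, Matrix.inv_apply_nonneg_of_mulVec_nonneg_imp_nonneg hB
    fun _ => Matrix.nonneg_of_mulVec_nonneg hZ hrow⟩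
end

section
/- Zalesak limiter produces bounds: Let m_i > 0, antidiffusive fluxes f_ij = −f_ji for j in a neighbor set N_i, values ū_i, and define ū_i^max = max over j ∈ N_i ∪ {i} of ū_j, ū_i^min analogously; P_i^± , Q_i^± , R_i^± and α_ij as in the Zalesak algorithm. Then the vector ũ defined by m_i ũ_i = m_i ū_i + Σ_{j∈N_i} α_ij f_ij satisfies ū_i^min ≤ ũ_i ≤ ū_i^max for all i. -/
/-!
Each limited flux `α_ij f_ij` is at most `R_i⁺ · max 0 f_ij`: a positive flux has `α_ij ≤ R_i⁺`,
and a negative one stays nonpositive because every `α_ij ≥ 0`. Summing, the net limited flux into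
node `i` is at most `R_i⁺ P_i⁺ ≤ Q_i⁺ = m_i (ū_i^max − ū_i)`, which is the upper bound after
dividing by `m_i > 0`. The lower bound is the same argument applied to `−f`.
-/

open Finset

noncomputable def zalesakRatio (Q P : ℝ) : ℝ :=
  if P = 0 then 1 else min 1 (Q / P)

theorem zalesakRatio_nonneg {Q P : ℝ} (h : 0 ≤ Q / P) : 0 ≤ zalesakRatio Q P := by
  unfold zalesakRatio
  split_ifs
  exacts [zero_le_one, le_min zero_le_one h]

theorem zalesakRatio_neg_neg (Q P : ℝ) : zalesakRatio (-Q) (-P) = zalesakRatio Q P := by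
  simp only [zalesakRatio, neg_eq_zero, neg_div_neg_eq]

theorem zalesakRatio_mul_le {Q : ℝ} (P : ℝ) (hQ : 0 ≤ Q) : zalesakRatio Q P * P ≤ Q := by
  unfold zalesakRatio
  split_ifs with hP
  · simpa [hP] using hQ
  rcases lt_or_gt_of_ne hP with hP | hP
  · rw [min_eq_right ((div_nonpos_of_nonneg_of_nonpos hQ hP.le).trans zero_le_one),
      div_mul_cancel₀ _ hP.ne]
  · calc min 1 (Q / P) * P ≤ Q / P * P := mul_le_mul_of_nonneg_right (min_le_right _ _) hP.le
      _ = Q := div_mul_cancel₀ _ hP.ne'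

theorem mul_le_mul_max_zero {a x R : ℝ} (hpos : 0 < x → a ≤ R) (hneg : x < 0 → 0 ≤ a) :
    a * x ≤ R * max 0 x := by
  rcases lt_trichotomy x 0 with hx | rfl | hx
  · rw [max_eq_left hx.le, mul_zero]
    exact mul_nonpos_of_nonneg_of_nonpos (hneg hx) hx.le
  · simp
  · rw [max_eq_right hx.le]
    exact mul_le_mul_of_nonneg_right (hpos hx) hx.le

section LimitedFlux

variable {ι : Type*} {s : Finset ι} {f α : ι → ℝ} {Q : ℝ}

theorem sum_mul_le_of_le_zalesakRatio (hQ : 0 ≤ Q)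
    (hpos : ∀ j ∈ s, 0 < f j → α j ≤ zalesakRatio Q (∑ k ∈ s, max 0 (f k)))
    (hneg : ∀ j ∈ s, f j < 0 → 0 ≤ α j) :
    ∑ j ∈ s, α j * f j ≤ Q :=
  calc ∑ j ∈ s, α j * f j
      ≤ ∑ j ∈ s, zalesakRatio Q (∑ k ∈ s, max 0 (f k)) * max 0 (f j) :=
        sum_le_sum fun j hj => mul_le_mul_max_zero (hpos j hj) (hneg j hj)
    _ = zalesakRatio Q (∑ k ∈ s, max 0 (f k)) * ∑ k ∈ s, max 0 (f k) := (mul_sum ..).symm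
    _ ≤ Q := zalesakRatio_mul_le _ hQ

theorem le_sum_mul_of_le_zalesakRatio (hQ : Q ≤ 0)
    (hneg : ∀ j ∈ s, f j < 0 → α j ≤ zalesakRatio Q (∑ k ∈ s, min 0 (f k)))
    (hpos : ∀ j ∈ s, 0 < f j → 0 ≤ α j) :
    Q ≤ ∑ j ∈ s, α j * f j := by
  have hP : ∑ k ∈ s, max 0 (-f k) = -∑ k ∈ s, min 0 (f k) := by
    rw [← sum_neg_distrib]
    exact sum_congr rfl fun k _ => by rw [← max_neg_neg, neg_zero]
  have := sum_mul_le_of_le_zalesakRatio (s := s) (f := -f) (α := α) (neg_nonneg.mpr hQ)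
    (fun j hj h => by simpa [hP, zalesakRatio_neg_neg] using hneg j hj (by simpa using h))
    (fun j hj h => hpos j hj (by simpa using h))
  simp only [Pi.neg_apply, mul_neg, sum_neg_distrib] at this
  linarith

end LimitedFlux

theorem stmt_14_general (M : ℕ) (Nb : Fin M → Finset (Fin M))
    (m : Fin M → ℝ) (hm : ∀ i, 0 < m i)
    (f : Fin M → Fin M → ℝ)
    (ubar : Fin M → ℝ)
    (umax umin : Fin M → ℝ)
    (humax : ∀ i, umax i = (insert i (Nb i)).sup' (Finset.insert_nonempty _ _) ubar)
    (humin : ∀ i, umin i = (insert i (Nb i)).inf' (Finset.insert_nonempty _ _) ubar)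
    (Pp Pm Qp Qm Rp Rm : Fin M → ℝ)
    (hPp : ∀ i, Pp i = ∑ j ∈ Nb i, max 0 (f i j))
    (hPm : ∀ i, Pm i = ∑ j ∈ Nb i, min 0 (f i j))
    (hQp : ∀ i, Qp i = m i * (umax i - ubar i))
    (hQm : ∀ i, Qm i = m i * (umin i - ubar i))
    (hRp : ∀ i, Rp i = if Pp i = 0 then 1 else min 1 (Qp i / Pp i))
    (hRm : ∀ i, Rm i = if Pm i = 0 then 1 else min 1 (Qm i / Pm i))
    (α : Fin M → Fin M → ℝ)
    (hα : ∀ i j, α i j =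
      if 0 < f i j then min (Rp i) (Rm j)
      else if f i j = 0 then 1
      else min (Rm i) (Rp j))
    (ut : Fin M → ℝ)
    (hut : ∀ i, m i * ut i = m i * ubar i + ∑ j ∈ Nb i, α i j * f i j) :
    ∀ i, umin i ≤ ut i ∧ ut i ≤ umax i := by
  have hRp' k : Rp k = zalesakRatio (Qp k) (Pp k) := hRp k
  have hRm' k : Rm k = zalesakRatio (Qm k) (Pm k) := hRm k
  have hQp_nonneg k : 0 ≤ Qp k := hQp k ▸ mul_nonneg (hm k).le
    (sub_nonneg.mpr (humax k ▸ le_sup' ubar (mem_insert_self k (Nb k))))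
  have hQm_nonpos k : Qm k ≤ 0 := hQm k ▸ mul_nonpos_of_nonneg_of_nonpos (hm k).le
    (sub_nonpos.mpr (humin k ▸ inf'_le ubar (mem_insert_self k (Nb k))))
  have hRp_nonneg k : 0 ≤ Rp k := hRp' k ▸ zalesakRatio_nonneg (div_nonneg (hQp_nonneg k)
    (hPp k ▸ sum_nonneg fun _ _ => le_max_left _ _))
  have hRm_nonneg k : 0 ≤ Rm k := hRm' k ▸ zalesakRatio_nonneg
    (div_nonneg_of_nonpos (hQm_nonpos k) (hPm k ▸ sum_nonpos fun _ _ => min_le_left _ _))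
  have hα_nonneg i j : 0 ≤ α i j := by
    rw [hα]
    split_ifs
    exacts [le_min (hRp_nonneg i) (hRm_nonneg j), zero_le_one,
      le_min (hRm_nonneg i) (hRp_nonneg j)]
  intro i
  have hup : ∑ j ∈ Nb i, α i j * f i j ≤ Qp i :=
    sum_mul_le_of_le_zalesakRatio (hQp_nonneg i)
      (fun j _ h => by rw [hα, if_pos h, ← hPp, ← hRp']; exact min_le_left _ _)
      (fun j _ _ => hα_nonneg i j)
  have hlo : Qm i ≤ ∑ j ∈ Nb i, α i j * f i j :=
    le_sum_mul_of_le_zalesakRatio (hQm_nonpos i)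
      (fun j _ h => by
        rw [hα, if_neg h.not_gt, if_neg h.ne, ← hPm, ← hRm']
        exact min_le_left _ _)
      (fun j _ _ => hα_nonneg i j)
  rw [hQp] at hup
  rw [hQm] at hlo
  exact ⟨le_of_mul_le_mul_left (by linarith [hut i]) (hm i),
    le_of_mul_le_mul_left (by linarith [hut i]) (hm i)⟩

theorem stmt_14 (M : ℕ) (Nb : Fin M → Finset (Fin M))
    (hNb : ∀ i j, j ∈ Nb i ↔ i ∈ Nb j)
    (m : Fin M → ℝ) (hm : ∀ i, 0 < m i)
    (f : Fin M → Fin M → ℝ) (hf : ∀ i j, f i j = -f j i)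
    (ubar : Fin M → ℝ)
    (umax umin : Fin M → ℝ)
    (humax : ∀ i, umax i = (insert i (Nb i)).sup' (Finset.insert_nonempty _ _) ubar)
    (humin : ∀ i, umin i = (insert i (Nb i)).inf' (Finset.insert_nonempty _ _) ubar)
    (Pp Pm Qp Qm Rp Rm : Fin M → ℝ)
    (hPp : ∀ i, Pp i = ∑ j ∈ Nb i, max 0 (f i j))
    (hPm : ∀ i, Pm i = ∑ j ∈ Nb i, min 0 (f i j))
    (hQp : ∀ i, Qp i = m i * (umax i - ubar i))
    (hQm : ∀ i, Qm i = m i * (umin i - ubar i))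
    (hRp : ∀ i, Rp i = if Pp i = 0 then 1 else min 1 (Qp i / Pp i))
    (hRm : ∀ i, Rm i = if Pm i = 0 then 1 else min 1 (Qm i / Pm i))
    (α : Fin M → Fin M → ℝ)
    (hα : ∀ i j, α i j =
      if 0 < f i j then min (Rp i) (Rm j)
      else if f i j = 0 then 1
      else min (Rm i) (Rp j))
    (ut : Fin M → ℝ)
    (hut : ∀ i, m i * ut i = m i * ubar i + ∑ j ∈ Nb i, α i j * f i j) :
    ∀ i, umin i ≤ ut i ∧ ut i ≤ umax i :=
  stmt_14_general M Nb m hm f ubar umax umin humax humin Pp Pm Qp Qm Rp Rm hPp hPm hQp hQm hRp hRm α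
    hα ut hut
end
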